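/- For each term t over the signed meadow signature Σ_ms = (0,1,−,+,·,⁻¹,s) there exists a Signed Standard Meadow Form t' with the same variables such that the equation t = t' holds in every signed meadow. -/

import Mathlib

/-- A meadow: a commutative ring with a total inverse operation satisfying
`(x⁻¹)⁻¹ = x` and the restricted inverse law `x * (x * x⁻¹) = x`. -/
class Meadow (M : Type) extends CommRing M, Inv M where
  minv_inv : ∀ x : M, x⁻¹⁻¹ = x
  ril : ∀ x : M, x * (x * x⁻¹) = x

/-- The Inverse Law `IL`: a cancellation meadow is a meadow satisfying it. -/
def InverseLaw (M : Type) [Meadow M] : Prop :=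
  ∀ x : M, x ≠ 0 → x * x⁻¹ = 1

/-- The axioms `Signs` for a sign operation on a meadow, where `1_x = x·x⁻¹` and
`0_x = 1 - x·x⁻¹`. -/
structure IsSign (M : Type) [Meadow M] (sg : M → M) : Prop where
  s1 : ∀ x : M, sg (x * x⁻¹) = x * x⁻¹
  s2 : ∀ x : M, sg (1 - x * x⁻¹) = 1 - x * x⁻¹
  s3 : sg (-1) = -1
  s4 : ∀ x : M, sg x⁻¹ = sg x
  s5 : ∀ x y : M, sg (x * y) = sg x * sg y
  s6 : ∀ x y : M,
    (1 - (sg x - sg y) * (sg x - sg y)⁻¹) * (sg (x + y) - sg x) = 0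

/-- Terms over the signed meadow signature `Σ_ms = (0,1,−,+,·,⁻¹,s)`. -/
inductive STerm : Type
  | var : ℕ → STerm
  | zero : STerm
  | one : STerm
  | neg : STerm → STerm
  | add : STerm → STerm → STerm
  | mul : STerm → STerm → STerm
  | inv : STerm → STerm
  | sgn : STerm → STerm

def STerm.eval {M : Type} [Zero M] [One M] [Neg M] [Add M] [Mul M] [Inv M]
    (sg : M → M) (ρ : ℕ → M) : STerm → M
  | .var v => ρ v
  | .zero => 0
  | .one => 1
  | .neg t => -(t.eval sg ρ)
  | .add s t => s.eval sg ρ + t.eval sg ρ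
  | .mul s t => s.eval sg ρ * t.eval sg ρ
  | .inv t => (t.eval sg ρ)⁻¹
  | .sgn t => sg (t.eval sg ρ)

def STerm.vars : STerm → Set ℕ
  | .var v => {v}
  | .zero => ∅
  | .one => ∅
  | .neg t => t.vars
  | .add s t => s.vars ∪ t.vars
  | .mul s t => s.vars ∪ t.vars
  | .inv t => t.vars
  | .sgn t => t.vars

/-- `Σ_fs`-terms: terms over the signed field signature `(0,1,−,+,·,s)`,
i.e. signed meadow terms not containing `⁻¹`. -/
def STerm.InvFree : STerm → Prop
  | .var _ => True
  | .zero => True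
  | .one => True
  | .neg t => t.InvFree
  | .add s t => s.InvFree ∧ t.InvFree
  | .mul s t => s.InvFree ∧ t.InvFree
  | .inv _ => False
  | .sgn t => t.InvFree

/-- The pseudo one `1_u = u · u⁻¹` as a term. -/
def STerm.pseudoOne (u : STerm) : STerm := .mul u (.inv u)

/-- The pseudo zero `0_u = 1 − u · u⁻¹` as a term. -/
def STerm.pseudoZero (u : STerm) : STerm := .add .one (.neg u.pseudoOne)

/-- Signed Standard Meadow Forms, by level: level 0 forms are `u · v⁻¹` with `u,v`
`Σ_fs`-terms; level `n+1` forms are `0_u · P + 1_u · Q` with `u` a `Σ_fs`-term and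
`P`, `Q` of level `n`. -/
inductive SSMF : ℕ → STerm → Prop
  | base (u v : STerm) : u.InvFree → v.InvFree → SSMF 0 (.mul u (.inv v))
  | step (n : ℕ) (u P Q : STerm) : u.InvFree → SSMF n P → SSMF n Q →
      SSMF (n + 1) (.add (.mul u.pseudoZero P) (.mul u.pseudoOne Q))

/-!
Every operation of `Σ_ms` commutes with the case distinction `0_u · P + 1_u · Q`: for `⁻¹`
because `1_u` is idempotent, for `s` by the axioms S1, S2 and S5. Hence, by induction on SSMFs,
it suffices to normalise the operations applied to level-0 forms `u · v⁻¹`. There `−`, `·`,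
`⁻¹` and `s` give level-0 forms directly, while a sum of two fractions splits on whether the
denominators vanish:
`u/v + u'/v' = 0_v · (u'/v') + 1_v · (0_{v'} · (u/v) + 1_{v'} · ((u v' + u' v)/(v v')))`.
Forms of different levels are combined after padding the lower one with trivial case
distinctions.
-/

namespace Meadow

variable {M : Type} [Meadow M]

theorem mul_self_mul_inv (x : M) : x * x * x⁻¹ = x := by
  linear_combination ril x

theorem inv_mul_inv_mul_self (x : M) : x⁻¹ * x⁻¹ * x = x⁻¹ := by
  have h := ril x⁻¹
  rw [minv_inv] at h
  linear_combination h

theorem inv_one : (1 : M)⁻¹ = 1 := by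
  linear_combination mul_self_mul_inv (1 : M)

theorem isIdempotentElem_mul_inv_self (x : M) : IsIdempotentElem (x * x⁻¹) := by
  unfold IsIdempotentElem
  linear_combination x⁻¹ * mul_self_mul_inv x

theorem inv_eq_of_mul_mul {x y : M} (hx : x * x * y = x) (hy : y * y * x = y) : x⁻¹ = y := by
  have hxy : x * x⁻¹ = x * y := by
    linear_combination y * mul_self_mul_inv x - x⁻¹ * hx
  linear_combination (-1 : M) * inv_mul_inv_mul_self x + (x⁻¹ + y) * hxy + hy

theorem mul_inv (x y : M) : (x * y)⁻¹ = x⁻¹ * y⁻¹ :=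
  inv_eq_of_mul_mul
    (by linear_combination (y * y * y⁻¹) * mul_self_mul_inv x + x * mul_self_mul_inv y)
    (by linear_combination (y⁻¹ * y⁻¹ * y) * inv_mul_inv_mul_self x
      + x⁻¹ * inv_mul_inv_mul_self y)

theorem inv_one_sub_mul_add_mul {e : M} (he : IsIdempotentElem e) (p q : M) :
    ((1 - e) * p + e * q)⁻¹ = (1 - e) * p⁻¹ + e * q⁻¹ := by
  unfold IsIdempotentElem at he
  apply inv_eq_of_mul_mul
  · linear_combination
      ((p - q) ^ 2 * ((1 - e) * p⁻¹ + e * q⁻¹) + (p ^ 2 - q ^ 2) * (p⁻¹ - q⁻¹)) * he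
        + (1 - e) * mul_self_mul_inv p + e * mul_self_mul_inv q
  · linear_combination
      ((p⁻¹ - q⁻¹) ^ 2 * ((1 - e) * p + e * q) + (p⁻¹ ^ 2 - q⁻¹ ^ 2) * (p - q)) * he
        + (1 - e) * inv_mul_inv_mul_self p + e * inv_mul_inv_mul_self q

theorem mul_inv_add_mul_inv (u v u' v' : M) :
    u * v⁻¹ + u' * v'⁻¹ =
      (1 - v * v⁻¹) * (u' * v'⁻¹) + v * v⁻¹ *
        ((1 - v' * v'⁻¹) * (u * v⁻¹) + v' * v'⁻¹ * ((u * v' + u' * v) * (v * v')⁻¹)) := by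
  rw [mul_inv]
  linear_combination
    (-u - v * u' * v' * v'⁻¹ ^ 2) * inv_mul_inv_mul_self v
      - (u * v * v' * v⁻¹ ^ 2 + v * u' * v⁻¹) * inv_mul_inv_mul_self v'

end Meadow

theorem IsSign.map_one_sub_mul_add_mul {M : Type} [Meadow M] {sg : M → M} (hs : IsSign M sg)
    (x p q : M) :
    sg ((1 - x * x⁻¹) * p + x * x⁻¹ * q) = (1 - x * x⁻¹) * sg p + x * x⁻¹ * sg q := by
  have he : x * x⁻¹ * (x * x⁻¹) = x * x⁻¹ := Meadow.isIdempotentElem_mul_inv_self x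
  have h_one := congrArg sg (show x * x⁻¹ * ((1 - x * x⁻¹) * p + x * x⁻¹ * q)
    = x * x⁻¹ * q by linear_combination (q - p) * he)
  have h_zero := congrArg sg (show (1 - x * x⁻¹) * ((1 - x * x⁻¹) * p + x * x⁻¹ * q)
    = (1 - x * x⁻¹) * p by linear_combination (p - q) * he)
  rw [hs.s5 (x * x⁻¹), hs.s5 (x * x⁻¹), hs.s1] at h_one
  rw [hs.s5 (1 - x * x⁻¹), hs.s5 (1 - x * x⁻¹), hs.s2] at h_zero
  linear_combination h_one + h_zero

namespace STerm

def branch (u P Q : STerm) : STerm := .add (.mul u.pseudoZero P) (.mul u.pseudoOne Q)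

@[simp]
theorem eval_branch {M : Type} [Meadow M] (sg : M → M) (ρ : ℕ → M) (u P Q : STerm) :
    (branch u P Q).eval sg ρ
      = (1 - u.eval sg ρ * (u.eval sg ρ)⁻¹) * P.eval sg ρ
        + u.eval sg ρ * (u.eval sg ρ)⁻¹ * Q.eval sg ρ := by
  simp only [branch, pseudoZero, pseudoOne, eval]
  ring

@[simp]
theorem vars_branch (u P Q : STerm) : (branch u P Q).vars = u.vars ∪ P.vars ∪ Q.vars := by
  ext x
  simp only [branch, pseudoZero, pseudoOne, vars, Set.mem_union, Set.mem_empty_iff_false]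
  tauto

def Equivalent (s t : STerm) : Prop :=
  s.vars = t.vars ∧ ∀ (M : Type) [Meadow M] (sg : M → M), IsSign M sg →
    ∀ ρ : ℕ → M, s.eval sg ρ = t.eval sg ρ

namespace Equivalent

theorem refl (t : STerm) : t.Equivalent t := ⟨rfl, fun _ _ _ _ _ => rfl⟩

theorem trans {s t r : STerm} (h₁ : s.Equivalent t) (h₂ : t.Equivalent r) : s.Equivalent r :=
  ⟨h₁.1.trans h₂.1, fun M _ sg hs ρ => (h₁.2 M sg hs ρ).trans (h₂.2 M sg hs ρ)⟩

theorem neg {s t : STerm} (h : s.Equivalent t) : (neg s).Equivalent (neg t) :=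
  ⟨h.1, fun M _ sg hs ρ => congrArg Neg.neg (h.2 M sg hs ρ)⟩

theorem inv {s t : STerm} (h : s.Equivalent t) : (inv s).Equivalent (inv t) :=
  ⟨h.1, fun M _ sg hs ρ => congrArg Inv.inv (h.2 M sg hs ρ)⟩

theorem sgn {s t : STerm} (h : s.Equivalent t) : (sgn s).Equivalent (sgn t) :=
  ⟨h.1, fun M _ sg hs ρ => congrArg sg (h.2 M sg hs ρ)⟩

theorem add {s s' t t' : STerm} (hs : s.Equivalent s') (ht : t.Equivalent t') :
    (add s t).Equivalent (add s' t') :=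
  ⟨congrArg₂ (· ∪ ·) hs.1 ht.1,
    fun M _ sg h ρ => congrArg₂ (· + ·) (hs.2 M sg h ρ) (ht.2 M sg h ρ)⟩

theorem mul {s s' t t' : STerm} (hs : s.Equivalent s') (ht : t.Equivalent t') :
    (mul s t).Equivalent (mul s' t') :=
  ⟨congrArg₂ (· ∪ ·) hs.1 ht.1,
    fun M _ sg h ρ => congrArg₂ (· * ·) (hs.2 M sg h ρ) (ht.2 M sg h ρ)⟩

theorem branch (u : STerm) {P P' Q Q' : STerm} (hP : P.Equivalent P') (hQ : Q.Equivalent Q') :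
    (branch u P Q).Equivalent (branch u P' Q') :=
  (mul (refl _) hP).add (mul (refl _) hQ)

end Equivalent

def HasSSMF (t : STerm) : Prop := ∃ t', (∃ n, SSMF n t') ∧ t.Equivalent t'

theorem HasSSMF.of_ssmf {n : ℕ} {t : STerm} (h : SSMF n t) : t.HasSSMF :=
  ⟨t, ⟨n, h⟩, Equivalent.refl t⟩

theorem HasSSMF.of_equivalent {s t : STerm} (ht : t.HasSSMF) (h : s.Equivalent t) :
    s.HasSSMF :=
  let ⟨t', ht', htt'⟩ := ht
  ⟨t', ht', h.trans htt'⟩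

end STerm

open STerm

theorem SSMF.exists_equivalent_of_le {n k : ℕ} {P : STerm} (h : SSMF n P) (hk : n ≤ k) :
    ∃ P', SSMF k P' ∧ P.Equivalent P' := by
  induction k, hk using Nat.le_induction with
  | base => exact ⟨P, h, Equivalent.refl P⟩
  | succ k _ ih =>
    obtain ⟨P', hP', hPP'⟩ := ih
    refine ⟨branch .zero P' P', SSMF.step k .zero P' P' trivial hP' hP', ?_, ?_⟩
    · simp [hPP'.1, vars]
    · intro M _ sg hs ρ
      rw [eval_branch, ← hPP'.2 M sg hs ρ]
      ring

theorem STerm.HasSSMF.branch {u P Q : STerm} (hu : u.InvFree) (hP : P.HasSSMF)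
    (hQ : Q.HasSSMF) : (branch u P Q).HasSSMF := by
  obtain ⟨P', ⟨m, hP'⟩, hPP'⟩ := hP
  obtain ⟨Q', ⟨n, hQ'⟩, hQQ'⟩ := hQ
  obtain ⟨P'', hP'', hP'P''⟩ := hP'.exists_equivalent_of_le (le_max_left m n)
  obtain ⟨Q'', hQ'', hQ'Q''⟩ := hQ'.exists_equivalent_of_le (le_max_right m n)
  exact ⟨_, ⟨_, SSMF.step _ u P'' Q'' hu hP'' hQ''⟩,
    Equivalent.branch u (hPP'.trans hP'P'') (hQQ'.trans hQ'Q'')⟩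

theorem SSMF.hasSSMF_map {op : STerm → STerm}
    (map_branch : ∀ u P Q, (op (branch u P Q)).Equivalent (branch u (op P) (op Q)))
    (map_base : ∀ u v, u.InvFree → v.InvFree → (op (.mul u (.inv v))).HasSSMF)
    {n : ℕ} {a : STerm} (ha : SSMF n a) : (op a).HasSSMF := by
  induction ha with
  | base u v hu hv => exact map_base u v hu hv
  | step n u P Q hu _ _ ihP ihQ =>
    exact (HasSSMF.branch hu ihP ihQ).of_equivalent (map_branch u P Q)

theorem SSMF.hasSSMF_map₂ {op : STerm → STerm → STerm}
    (map_branch_left :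
      ∀ u P Q b, (op (branch u P Q) b).Equivalent (branch u (op P b) (op Q b)))
    (map_branch_right :
      ∀ a u P Q, (op a (branch u P Q)).Equivalent (branch u (op a P) (op a Q)))
    (map_base : ∀ u v u' v', u.InvFree → v.InvFree → u'.InvFree → v'.InvFree →
      (op (.mul u (.inv v)) (.mul u' (.inv v'))).HasSSMF)
    {m n : ℕ} {a b : STerm} (ha : SSMF m a) (hb : SSMF n b) : (op a b).HasSSMF := by
  induction ha generalizing n b with
  | step m u P Q hu _ _ ihP ihQ =>
    exact (HasSSMF.branch hu (ihP hb) (ihQ hb)).of_equivalent (map_branch_left u P Q b)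
  | base u v hu hv =>
    induction hb with
    | base u' v' hu' hv' => exact map_base u v u' v' hu hv hu' hv'
    | step n w P Q hw _ _ ihP ihQ =>
      exact (HasSSMF.branch hw ihP ihQ).of_equivalent (map_branch_right _ w P Q)

namespace STerm

theorem HasSSMF.map {op : STerm → STerm}
    (map_equivalent : ∀ {s t}, s.Equivalent t → (op s).Equivalent (op t))
    (map_branch :
      ∀ u P Q, (op (STerm.branch u P Q)).Equivalent (STerm.branch u (op P) (op Q)))
    (map_base : ∀ u v, u.InvFree → v.InvFree → (op (.mul u (.inv v))).HasSSMF)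
    {t : STerm} (ht : t.HasSSMF) : (op t).HasSSMF :=
  let ⟨_, ⟨_, ha⟩, hta⟩ := ht
  (ha.hasSSMF_map map_branch map_base).of_equivalent (map_equivalent hta)

theorem HasSSMF.map₂ {op : STerm → STerm → STerm}
    (map_equivalent :
      ∀ {s s' t t'}, s.Equivalent s' → t.Equivalent t' → (op s t).Equivalent (op s' t'))
    (map_branch_left : ∀ u P Q b,
      (op (STerm.branch u P Q) b).Equivalent (STerm.branch u (op P b) (op Q b)))
    (map_branch_right : ∀ a u P Q,
      (op a (STerm.branch u P Q)).Equivalent (STerm.branch u (op a P) (op a Q)))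
    (map_base : ∀ u v u' v', u.InvFree → v.InvFree → u'.InvFree → v'.InvFree →
      (op (.mul u (.inv v)) (.mul u' (.inv v'))).HasSSMF)
    {s t : STerm} (hs : s.HasSSMF) (ht : t.HasSSMF) : (op s t).HasSSMF :=
  let ⟨_, ⟨_, ha⟩, hsa⟩ := hs
  let ⟨_, ⟨_, hb⟩, htb⟩ := ht
  (ha.hasSSMF_map₂ map_branch_left map_branch_right map_base hb).of_equivalent
    (map_equivalent hsa htb)

theorem HasSSMF.of_invFree {t : STerm} (ht : t.InvFree) : t.HasSSMF :=
  (HasSSMF.of_ssmf (.base t .one ht trivial)).of_equivalent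
    ⟨(Set.union_empty _).symm, fun M _ sg _ ρ => by simp [eval, Meadow.inv_one]⟩

theorem HasSSMF.neg {t : STerm} (ht : t.HasSSMF) : (neg t).HasSSMF :=
  ht.map Equivalent.neg
    (fun u P Q => ⟨by simp [vars], fun M _ sg _ ρ => by simp only [eval, eval_branch]; ring⟩)
    (fun u v hu hv => (HasSSMF.of_ssmf (.base (.neg u) v hu hv)).of_equivalent
      ⟨rfl, fun M _ sg _ ρ => by simp only [eval]; ring⟩)

theorem HasSSMF.inv {t : STerm} (ht : t.HasSSMF) : (inv t).HasSSMF :=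
  ht.map Equivalent.inv
    (fun u P Q => ⟨by simp [vars], fun M _ sg _ ρ => by
      simp only [eval, eval_branch]
      exact Meadow.inv_one_sub_mul_add_mul (Meadow.isIdempotentElem_mul_inv_self _) _ _⟩)
    (fun u v hu hv => (HasSSMF.of_ssmf (.base v u hv hu)).of_equivalent
      ⟨Set.union_comm _ _, fun M _ sg _ ρ => by
        simp only [eval]; rw [Meadow.mul_inv, Meadow.minv_inv, mul_comm]⟩)

theorem HasSSMF.sgn {t : STerm} (ht : t.HasSSMF) : (sgn t).HasSSMF :=
  ht.map Equivalent.sgn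
    (fun u P Q => ⟨by simp [vars], fun M _ sg hs ρ => by
      simp only [eval, eval_branch]
      exact hs.map_one_sub_mul_add_mul _ _ _⟩)
    (fun u v hu hv =>
      (HasSSMF.of_ssmf (.base (.mul (.sgn u) (.sgn v)) .one ⟨hu, hv⟩ trivial)).of_equivalent
        ⟨by simp [vars], fun M _ sg hs ρ => by
          simp only [eval]; rw [hs.s5, hs.s4, Meadow.inv_one, mul_one]⟩)

theorem HasSSMF.mul {s t : STerm} (hs : s.HasSSMF) (ht : t.HasSSMF) : (mul s t).HasSSMF :=
  hs.map₂ Equivalent.mul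
    (fun u P Q b => ⟨by ext; simp [vars]; tauto,
      fun M _ sg _ ρ => by simp only [eval, eval_branch]; ring⟩)
    (fun a u P Q => ⟨by ext; simp [vars]; tauto,
      fun M _ sg _ ρ => by simp only [eval, eval_branch]; ring⟩)
    (fun u v u' v' hu hv hu' hv' =>
      (HasSSMF.of_ssmf (.base (.mul u u') (.mul v v') ⟨hu, hu'⟩ ⟨hv, hv'⟩)).of_equivalent
        ⟨by ext; simp [vars]; tauto, fun M _ sg _ ρ => by
          simp only [eval]; rw [Meadow.mul_inv]; ring⟩)
    ht

theorem HasSSMF.add {s t : STerm} (hs : s.HasSSMF) (ht : t.HasSSMF) : (add s t).HasSSMF :=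
  hs.map₂ Equivalent.add
    (fun u P Q b => ⟨by ext; simp [vars]; tauto,
      fun M _ sg _ ρ => by simp only [eval, eval_branch]; ring⟩)
    (fun a u P Q => ⟨by ext; simp [vars]; tauto,
      fun M _ sg _ ρ => by simp only [eval, eval_branch]; ring⟩)
    (fun u v u' v' hu hv hu' hv' =>
      (HasSSMF.branch hv (.of_ssmf (.base u' v' hu' hv'))
        (.branch hv' (.of_ssmf (.base u v hu hv))
          (.of_ssmf (.base (.add (.mul u v') (.mul u' v)) (.mul v v')
            ⟨⟨hu, hv'⟩, ⟨hu', hv⟩⟩ ⟨hv, hv'⟩)))).of_equivalent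
        ⟨by ext; simp [vars]; tauto, fun M _ sg _ ρ => by
          simp only [eval, eval_branch]; exact Meadow.mul_inv_add_mul_inv _ _ _ _⟩)
    ht

theorem hasSSMF : ∀ t : STerm, t.HasSSMF
  | var _ => .of_invFree trivial
  | zero => .of_invFree trivial
  | one => .of_invFree trivial
  | neg t => t.hasSSMF.neg
  | add s t => s.hasSSMF.add t.hasSSMF
  | mul s t => s.hasSSMF.mul t.hasSSMF
  | inv t => t.hasSSMF.inv
  | sgn t => t.hasSSMF.sgn

end STerm

/-- every term over `Σ_ms` is equal, in every signed meadow, to a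
Signed Standard Meadow Form with the same variables. -/
theorem exists_ssmf (t : STerm) :
    ∃ t' : STerm, (∃ n : ℕ, SSMF n t') ∧ t'.vars = t.vars ∧
      ∀ (M : Type) [Meadow M] (sg : M → M), IsSign M sg →
        ∀ ρ : ℕ → M, t.eval sg ρ = t'.eval sg ρ := by
  obtain ⟨t', ht', hvars, heval⟩ := t.hasSSMF
  exact ⟨t', ht', hvars.symm, heval⟩
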